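/- Let f_1, …, f_n : ℝ^d → ℝ be differentiable with F(w) = (1/n)·Σ_{i=1}^n f_i(w) convex and minimized at w*. Fix w_t ∈ ℝ^d, z ∈ ℝ^d, η ≥ 0, δ > 0, positive integer b, and set u = w_t + z, z* = w* − w_t. Suppose every coordinate of z* lies in D_{δ,b} = {δ·k : k ∈ ℤ, −2^{b−1} ≤ k ≤ 2^{b−1}−1}, and suppose (1/n)·Σ_{i=1}^n ‖∇f_i(u)‖² ≤ G². For each i let ẑ_i = z − η∇f_i(u), and quantize each coordinate of ẑ_i independently with the stochastic uniform quantizer Q_{δ,b}. Then (1/n)·Σ_{i=1}^n Σ_{j=1}^d E[(Q_{δ,b}((ẑ_i)_j) − (z*)_j)²] ≤ ‖u − w*‖² − 2η·(F(u) − F(w*)) + η²·G² + d·δ²/4. -/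

import Mathlib

/-!
Stochastic rounding is unbiased, so for a grid point `a` between the two neighbours
`lo ≤ v ≤ hi` of `v` the expected squared error is `(v - a)² + (v - lo)(hi - v)`, and the
rounding variance `(v - lo)(hi - v)` is at most `δ²/4`. Clipping only moves `v` towards `a`,
because `a` lies in the clipping range. Summing over coordinates bounds the `i`-th term by
`‖u - w* - η∇fᵢ(u)‖² + dδ²/4`; expanding the square, averaging over `i` and using the
first-order convexity inequality `F(u) - F(w*) ≤ ⟪∇F(u), u - w*⟫` gives the claim.
-/

/-- The expectation `E[g(Q_{δ,b}(v'))]` of a function `g` of the stochastic uniform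
quantizer `Q_{δ,b}` applied to `v'`: inputs at or above `δ(2^{b-1}-1)` are clipped to
`δ(2^{b-1}-1)`, inputs at or below `-δ·2^{b-1}` are clipped to `-δ·2^{b-1}`, and otherwise
the quantizer takes value `δ⌊v'/δ⌋` with probability `(δ⌈v'/δ⌉ - v')/δ` and value
`δ⌈v'/δ⌉` with probability `(v' - δ⌊v'/δ⌋)/δ`. -/
noncomputable def quantExp (δ : ℝ) (b : ℕ) (v' : ℝ) (g : ℝ → ℝ) : ℝ :=
  if δ * (2 ^ (b - 1) - 1) ≤ v' then g (δ * (2 ^ (b - 1) - 1))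
  else if v' ≤ -(δ * 2 ^ (b - 1)) then g (-(δ * 2 ^ (b - 1)))
  else (δ * (⌈v' / δ⌉ : ℝ) - v') / δ * g (δ * (⌊v' / δ⌋ : ℝ))
    + (v' - δ * (⌊v' / δ⌋ : ℝ)) / δ * g (δ * (⌈v' / δ⌉ : ℝ))

open Finset Set
open scoped RealInnerProductSpace

lemma two_point_mean_sq_sub_le {δ lo hi v : ℝ} (a : ℝ) (hδ : 0 < δ) (hlo : lo ≤ v)
    (hhi : v ≤ hi) (hgap : hi - lo ≤ δ) :
    (hi - v) / δ * (lo - a) ^ 2 + (v - lo) / δ * (hi - a) ^ 2 ≤ (v - a) ^ 2 + δ ^ 2 / 4 := by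
  have hvar : (hi - v) * (v - lo) ≤ δ ^ 2 / 4 := by
    nlinarith [sq_nonneg (hi - v - (v - lo))]
  calc (hi - v) / δ * (lo - a) ^ 2 + (v - lo) / δ * (hi - a) ^ 2
      = (hi - lo) / δ * ((v - a) ^ 2 + (hi - v) * (v - lo)) := by field_simp; ring
    _ ≤ 1 * ((v - a) ^ 2 + δ ^ 2 / 4) :=
      mul_le_mul ((div_le_one hδ).2 hgap) (by linarith)
        (add_nonneg (sq_nonneg _) (mul_nonneg (by linarith) (by linarith))) zero_le_one
    _ = (v - a) ^ 2 + δ ^ 2 / 4 := one_mul _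

lemma quantExp_sq_sub_le {δ : ℝ} (hδ : 0 < δ) (b : ℕ) (v : ℝ) {a : ℝ}
    (ha : a ∈ Icc (-(δ * 2 ^ (b - 1))) (δ * (2 ^ (b - 1) - 1))) :
    quantExp δ b v (fun q => (q - a) ^ 2) ≤ (v - a) ^ 2 + δ ^ 2 / 4 := by
  unfold quantExp
  split_ifs with hup hdown
  · nlinarith [ha.2]
  · nlinarith [ha.1]
  · apply two_point_mean_sq_sub_le a hδ
    · rw [← le_div_iff₀' hδ]; exact Int.floor_le _
    · rw [← div_le_iff₀' hδ]; exact Int.le_ceil _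
    · rw [← mul_sub, mul_le_iff_le_one_right hδ, sub_le_iff_le_add']
      exact_mod_cast Int.ceil_le_floor_add_one _

lemma sum_quantExp_sq_sub_le {ι : Type*} [Fintype ι] {δ : ℝ} (hδ : 0 < δ) (b : ℕ)
    (x c : EuclideanSpace ℝ ι)
    (hc : ∀ j, c j ∈ Icc (-(δ * 2 ^ (b - 1))) (δ * (2 ^ (b - 1) - 1))) :
    ∑ j, quantExp δ b (x j) (fun q => (q - c j) ^ 2)
      ≤ ‖x - c‖ ^ 2 + Fintype.card ι * δ ^ 2 / 4 := by
  calc ∑ j, quantExp δ b (x j) (fun q => (q - c j) ^ 2)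
      ≤ ∑ j, ((x j - c j) ^ 2 + δ ^ 2 / 4) :=
        sum_le_sum fun j _ => quantExp_sq_sub_le hδ b (x j) (hc j)
    _ = ‖x - c‖ ^ 2 + Fintype.card ι * δ ^ 2 / 4 := by
        simp [sum_add_distrib, EuclideanSpace.real_norm_sq_eq, mul_div_assoc]

lemma intCast_mul_mem_Icc {δ : ℝ} (hδ : 0 ≤ δ) {m : ℕ} {k : ℤ} (hk : -(2 ^ m : ℤ) ≤ k)
    (hk' : k ≤ 2 ^ m - 1) : δ * (k : ℝ) ∈ Icc (-(δ * 2 ^ m)) (δ * (2 ^ m - 1)) := by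
  have hk : -(2 ^ m : ℝ) ≤ k := by exact_mod_cast hk
  have hk' : (k : ℝ) ≤ 2 ^ m - 1 := by exact_mod_cast hk'
  constructor <;> nlinarith

lemma ConvexOn.apply_sub_le_of_hasFDerivAt {E : Type*} [NormedAddCommGroup E]
    [NormedSpace ℝ E] {f : E → ℝ} {f' : E →L[ℝ] ℝ} {x : E} (hf : ConvexOn ℝ univ f)
    (hf' : HasFDerivAt f f' x) (y : E) : f x - f y ≤ f' (x - y) := by
  have hline : ConvexOn ℝ univ (f ∘ AffineMap.lineMap (k := ℝ) x y) := hf.comp_affineMap _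
  have hderiv : HasDerivAt (f ∘ AffineMap.lineMap (k := ℝ) x y) (f' (y - x)) 0 := by
    have := (AffineMap.lineMap_apply_zero (k := ℝ) x y).symm ▸ hf'
    simpa using this.comp_hasDerivAt (0 : ℝ) AffineMap.hasDerivAt_lineMap
  have := hline.le_slope_of_hasDerivAt (mem_univ 0) (mem_univ 1) one_pos hderiv
  simp only [slope_def_field, Function.comp_apply, AffineMap.lineMap_apply_one,
    AffineMap.lineMap_apply_zero, sub_zero, div_one, map_sub] at this ⊢
  linarith

lemma hasGradientAt_const_mul_sum {E ι : Type*} [NormedAddCommGroup E] [InnerProductSpace ℝ E]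
    [CompleteSpace E] (s : Finset ι) (c : ℝ) {f : ι → E → ℝ} {g : ι → E} {x : E}
    (h : ∀ i ∈ s, HasGradientAt (f i) (g i) x) :
    HasGradientAt (fun w => c * ∑ i ∈ s, f i w) (c • ∑ i ∈ s, g i) x := by
  simp only [hasGradientAt_iff_hasFDerivAt, map_smul, map_sum] at h ⊢
  exact (HasFDerivAt.fun_sum h).const_mul c

lemma sum_norm_sub_smul_sq {E ι : Type*} [NormedAddCommGroup E] [InnerProductSpace ℝ E]
    (s : Finset ι) (a : E) (η : ℝ) (v : ι → E) :
    ∑ i ∈ s, ‖a - η • v i‖ ^ 2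
      = #s * ‖a‖ ^ 2 - 2 * η * ⟪∑ i ∈ s, v i, a⟫ + η ^ 2 * ∑ i ∈ s, ‖v i‖ ^ 2 := by
  simp only [norm_sub_sq_real, inner_smul_right, norm_smul, mul_pow, Real.norm_eq_abs, sq_abs,
    sum_add_distrib, sum_sub_distrib, sum_inner, ← mul_sum, sum_const, nsmul_eq_mul]
  simp only [real_inner_comm a]
  ring

theorem qesgd_one_step_general (d n : ℕ) (hn : 0 < n)
    (f : Fin n → EuclideanSpace ℝ (Fin d) → ℝ)
    (hf : ∀ i, Differentiable ℝ (f i))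
    (F : EuclideanSpace ℝ (Fin d) → ℝ)
    (hF : F = fun w => (1 / (n : ℝ)) * ∑ i, f i w)
    (hconv : ConvexOn ℝ Set.univ F)
    (wstar : EuclideanSpace ℝ (Fin d))
    (wt z u : EuclideanSpace ℝ (Fin d)) (hu : u = wt + z)
    (η : ℝ) (hη : 0 ≤ η) (δ : ℝ) (hδ : 0 < δ) (b : ℕ)
    (hzstar : ∀ j : Fin d, ∃ k : ℤ, -(2 ^ (b - 1) : ℤ) ≤ k ∧ k ≤ 2 ^ (b - 1) - 1 ∧
      (wstar - wt) j = δ * (k : ℝ))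
    (G : ℝ) (hG : (1 / (n : ℝ)) * ∑ i, ‖gradient (f i) u‖ ^ 2 ≤ G ^ 2) :
    (1 / (n : ℝ)) * ∑ i, ∑ j : Fin d,
        quantExp δ b ((z - η • gradient (f i) u) j)
          (fun q => (q - (wstar - wt) j) ^ 2)
      ≤ ‖u - wstar‖ ^ 2 - 2 * η * (F u - F wstar) + η ^ 2 * G ^ 2
        + d * δ ^ 2 / 4 := by
  set g := fun i => gradient (f i) u
  have hgrid : ∀ j, (wstar - wt) j ∈ Icc (-(δ * 2 ^ (b - 1))) (δ * (2 ^ (b - 1) - 1)) := by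
    intro j
    obtain ⟨k, hk, hk', hj⟩ := hzstar j
    exact hj ▸ intCast_mul_mem_Icc hδ.le hk hk'
  have hshift : ∀ i, z - η • g i - (wstar - wt) = u - wstar - η • g i := by
    intro i; rw [hu]; abel
  have hFgrad : HasGradientAt F ((1 / (n : ℝ)) • ∑ i, g i) u :=
    hF ▸ hasGradientAt_const_mul_sum _ _ fun i _ => (hf i u).hasGradientAt
  have hdescent : F u - F wstar ≤ ⟪(1 / (n : ℝ)) • ∑ i, g i, u - wstar⟫ :=
    hconv.apply_sub_le_of_hasFDerivAt (hasGradientAt_iff_hasFDerivAt.1 hFgrad) wstar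
  have hn' : (n : ℝ) ≠ 0 := by positivity
  calc (1 / (n : ℝ)) * ∑ i, ∑ j,
        quantExp δ b ((z - η • g i) j) (fun q => (q - (wstar - wt) j) ^ 2)
      ≤ (1 / (n : ℝ)) * ∑ i, (‖u - wstar - η • g i‖ ^ 2 + d * δ ^ 2 / 4) := by
        gcongr with i
        simpa [hshift] using sum_quantExp_sq_sub_le hδ b (z - η • g i) (wstar - wt) hgrid
    _ = ‖u - wstar‖ ^ 2 - 2 * η * ⟪(1 / (n : ℝ)) • ∑ i, g i, u - wstar⟫
          + η ^ 2 * ((1 / (n : ℝ)) * ∑ i, ‖g i‖ ^ 2) + d * δ ^ 2 / 4 := by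
        rw [sum_add_distrib, sum_norm_sub_smul_sq, real_inner_smul_left]
        simp only [sum_const, card_univ, Fintype.card_fin, nsmul_eq_mul]
        field_simp
    _ ≤ ‖u - wstar‖ ^ 2 - 2 * η * (F u - F wstar) + η ^ 2 * G ^ 2 + d * δ ^ 2 / 4 := by
        gcongr

/-- One-step inequality of the QESGD algorithm: with `u = w_t + z`, `z* = w* - w_t` whose
coordinates all lie in `D_{δ,b}`, averaged second-moment bound
`(1/n)Σ_i ‖∇f_i(u)‖² ≤ G²`, and quantized updates `ẑ_i = z - η∇f_i(u)` (each coordinate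
quantized independently by `Q_{δ,b}`), we have
`(1/n)Σ_i Σ_j E[(Q_{δ,b}((ẑ_i)_j) - (z*)_j)²]
  ≤ ‖u - w*‖² - 2η(F(u) - F(w*)) + η²G² + dδ²/4`. -/
theorem qesgd_one_step (d n : ℕ) (hn : 0 < n) (hd : 0 < d)
    (f : Fin n → EuclideanSpace ℝ (Fin d) → ℝ)
    (hf : ∀ i, Differentiable ℝ (f i))
    (F : EuclideanSpace ℝ (Fin d) → ℝ)
    (hF : F = fun w => (1 / (n : ℝ)) * ∑ i, f i w)
    (hconv : ConvexOn ℝ Set.univ F)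
    (wstar : EuclideanSpace ℝ (Fin d)) (hmin : ∀ w, F wstar ≤ F w)
    (wt z u : EuclideanSpace ℝ (Fin d)) (hu : u = wt + z)
    (η : ℝ) (hη : 0 ≤ η) (δ : ℝ) (hδ : 0 < δ) (b : ℕ) (hb : 1 ≤ b)
    (hzstar : ∀ j : Fin d, ∃ k : ℤ, -(2 ^ (b - 1) : ℤ) ≤ k ∧ k ≤ 2 ^ (b - 1) - 1 ∧
      (wstar - wt) j = δ * (k : ℝ))
    (G : ℝ) (hG : (1 / (n : ℝ)) * ∑ i, ‖gradient (f i) u‖ ^ 2 ≤ G ^ 2) :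
    (1 / (n : ℝ)) * ∑ i, ∑ j : Fin d,
        quantExp δ b ((z - η • gradient (f i) u) j)
          (fun q => (q - (wstar - wt) j) ^ 2)
      ≤ ‖u - wstar‖ ^ 2 - 2 * η * (F u - F wstar) + η ^ 2 * G ^ 2
        + d * δ ^ 2 / 4 :=
  qesgd_one_step_general d n hn f hf F hF hconv wstar wt z u hu η hη δ hδ b hzstar G hG
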